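/- Let M be a finite monoid and let P ⊆ M be a cyclic subset such that every P-chain of idempotents in M has length at most n. Then there exist subsets P₁ ⊇ P₂ ⊇ ⋯ ⊇ Pₙ of M such that: each P_i is cyclic; each P_i is upward closed on idempotents for the J-preorder (for all idempotents e, f, e ∈ P_i and e ≤_J f imply f ∈ P_i); and P = P₁ − P₂ + P₃ − ⋯ ± Pₙ, i.e., P = (P₁ ∖ P₂) ∪ (P₃ ∖ P₄) ∪ ⋯ with Pₙ₊₁ = ∅. -/
import Mathlib

set_option linter.unusedSectionVars false


/-- A subset `P` of a monoid is cyclic if it is closed under powers and roots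
(`uⁿ ∈ P ↔ u ∈ P` for `n > 0`) and under conjugation (`uv ∈ P ↔ vu ∈ P`). -/
def IsCyclicSet {M : Type*} [Monoid M] (P : Set M) : Prop :=
  (∀ u : M, ∀ n : ℕ, 0 < n → (u ^ n ∈ P ↔ u ∈ P)) ∧
  (∀ u v : M, u * v ∈ P ↔ v * u ∈ P)

/-- Green's `J`-preorder: `s ≤_J t` iff `s = u t v` for some `u, v`. -/
def leJ {M : Type*} [Monoid M] (s t : M) : Prop :=
  ∃ u v : M, s = u * t * v

/-- A `P`-chain of idempotents of length `m`. -/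
def IdemChain {M : Type*} [Monoid M] (P : Set M) (e : ℕ → M) (m : ℕ) : Prop :=
  0 < m ∧ (∀ i, i < m → IsIdempotentElem (e i)) ∧
  (∀ i, i + 1 < m → leJ (e i) (e (i + 1))) ∧ e 0 ∈ P ∧
  ∀ i, 0 < i → i < m → (e i ∈ P ↔ e (i - 1) ∉ P)

/-- The partial alternating combination `P₁ − P₂ + ⋯ ± P_j`, evaluated from
left to right (the chain is indexed from `0`, so `Pseq i` is `P_{i+1}`). -/
def partialAlt {E : Type*} (F : ℕ → Set E) : ℕ → Set E
  | 0 => ∅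
  | j + 1 => if Even j then partialAlt F j ∪ F j else partialAlt F j \ F j

section Aux

variable {M : Type*} [Monoid M]

theorem leJ_refl (e : M) : leJ e e := ⟨1, 1, by simp⟩

theorem leJ_trans {a b c : M} (h1 : leJ a b) (h2 : leJ b c) : leJ a c := by
  obtain ⟨u, v, rfl⟩ := h1
  obtain ⟨x, y, rfl⟩ := h2
  exact ⟨u * x, y * v, by simp [mul_assoc]⟩

theorem idem_pow {e : M} (he : IsIdempotentElem e) : ∀ k, 0 < k → e ^ k = e := by
  intro k hk
  induction k with
  | zero => omega
  | succ k ih =>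
    rcases Nat.eq_zero_or_pos k with hk0 | hk0
    · simp [hk0]
    · rw [pow_succ, ih hk0, he]

theorem pow_idem_unique {u : M} {a b : ℕ} (ha : 0 < a) (hb : 0 < b)
    (h1 : IsIdempotentElem (u ^ a)) (h2 : IsIdempotentElem (u ^ b)) : u ^ a = u ^ b := by
  have e1 : (u ^ a) ^ b = u ^ a := idem_pow h1 b hb
  have e2 : (u ^ b) ^ a = u ^ b := idem_pow h2 a ha
  rw [← pow_mul] at e1 e2
  rw [← e1, ← e2, mul_comm]

theorem exists_pow_idem [Finite M] (u : M) : ∃ k, 0 < k ∧ IsIdempotentElem (u ^ k) := by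
  obtain ⟨a, b, hne, hab⟩ := Finite.exists_ne_map_eq_of_infinite (fun k : ℕ => u ^ k)
  wlog hlt : a < b generalizing a b
  · exact this b a hne.symm hab.symm (by omega)
  set d := b - a with hd
  have hd0 : 0 < d := by omega
  have hstep : ∀ m, a ≤ m → u ^ (m + d) = u ^ m := by
    intro m hm
    have h1 : u ^ (m + d) = u ^ (m - a) * u ^ b := by
      rw [← pow_add]; congr 1; omega
    have h2 : u ^ m = u ^ (m - a) * u ^ a := by
      rw [← pow_add]; congr 1; omega
    rw [h1, ← hab, ← h2]
  have hper : ∀ t m, a ≤ m → u ^ (m + t * d) = u ^ m := by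
    intro t
    induction t with
    | zero => simp
    | succ t ih =>
      intro m hm
      have h1 : m + (t + 1) * d = (m + t * d) + d := by ring
      rw [h1, hstep (m + t * d) (by omega), ih m hm]
  refine ⟨d * (a + 1), by positivity, ?_⟩
  unfold IsIdempotentElem
  rw [← pow_add]
  have := hper (a + 1) (d * (a + 1)) (by nlinarith)
  rw [← this]; congr 1; ring

variable [Finite M]

/-- The idempotent power of `u`. -/
noncomputable def omg (u : M) : M := u ^ (exists_pow_idem u).choose

theorem omg_spec (u : M) : 0 < (exists_pow_idem u).choose ∧
    IsIdempotentElem (u ^ (exists_pow_idem u).choose) := (exists_pow_idem u).choose_spec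

theorem omg_idem (u : M) : IsIdempotentElem (omg u) := (omg_spec u).2

theorem omg_eq_of_idem_pow {u : M} {k : ℕ} (hk : 0 < k) (h : IsIdempotentElem (u ^ k)) :
    omg u = u ^ k := pow_idem_unique (omg_spec u).1 hk (omg_spec u).2 h

theorem omg_pow (u : M) {k : ℕ} (hk : 0 < k) : omg (u ^ k) = omg u := by
  have h1 := omg_spec (u ^ k)
  have h2 : omg (u ^ k) = u ^ (k * (exists_pow_idem (u ^ k)).choose) := by
    rw [pow_mul]; rfl
  have h3 : IsIdempotentElem (u ^ (k * (exists_pow_idem (u ^ k)).choose)) := by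
    rw [pow_mul]; exact h1.2
  rw [h2, ← omg_eq_of_idem_pow (Nat.mul_pos hk h1.1) h3]

theorem omg_of_idem {e : M} (he : IsIdempotentElem e) : omg e = e := by
  have := omg_eq_of_idem_pow (u := e) (k := 1) one_pos (by simpa using he)
  simpa using this

theorem conj_pow_key (u v : M) : ∀ k, (u * v) ^ (k + 1) = u * (v * u) ^ k * v := by
  intro k
  induction k with
  | zero => simp
  | succ k ih =>
    rw [pow_succ, ih, pow_succ]
    simp [mul_assoc]

theorem leJ_omg_conj (u v : M) : leJ (omg (u * v)) (omg (v * u)) := by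
  obtain ⟨a, ha, hia⟩ := exists_pow_idem (u * v)
  obtain ⟨b, hb, hib⟩ := exists_pow_idem (v * u)
  set N := a * b with hN
  have hN0 : 0 < N := by positivity
  have heN : IsIdempotentElem ((u * v) ^ N) := by
    rw [hN, pow_mul]; exact hia.pow b
  have hfN : IsIdempotentElem ((v * u) ^ N) := by
    rw [hN, mul_comm a b, pow_mul]; exact hib.pow a
  rw [omg_eq_of_idem_pow hN0 heN, omg_eq_of_idem_pow hN0 hfN]
  refine ⟨u, (v * u) ^ (N - 1) * v, ?_⟩
  have h1 : u * (v * u) ^ N * ((v * u) ^ (N - 1) * v) = u * (v * u) ^ (N + (N - 1)) * v := by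
    rw [pow_add]; simp [mul_assoc]
  have h2 : u * (v * u) ^ (N + (N - 1)) * v = (u * v) ^ (N + (N - 1) + 1) :=
    (conj_pow_key u v (N + (N - 1))).symm
  have h3 : (u * v) ^ (N + (N - 1) + 1) = ((u * v) ^ N) ^ 2 := by
    rw [← pow_mul]; congr 1; omega
  have h4 : ((u * v) ^ N) ^ 2 = (u * v) ^ N := by
    rw [sq]; exact heN
  rw [h1, h2, h3, h4]

/-- The set of lengths of `P`-chains ending `≤_J e`. -/
def rkSet (P : Set M) (e : M) : Set ℕ :=
  {m | ∃ c : ℕ → M, IdemChain P c m ∧ leJ (c (m - 1)) e}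

noncomputable def rk (P : Set M) (e : M) : ℕ := sSup (rkSet P e)

theorem chain_even {P : Set M} {c : ℕ → M} {m : ℕ} (hc : IdemChain P c m) :
    ∀ i, i < m → (c i ∈ P ↔ Even i) := by
  obtain ⟨hm, _, _, h0, halt⟩ := hc
  intro i
  induction i with
  | zero => intro _; simpa using h0
  | succ i ih =>
    intro hi
    have h1 := halt (i + 1) (by omega) hi
    simp only [Nat.add_sub_cancel] at h1
    rw [h1, Nat.even_add_one, not_iff_not]
    exact ih (by omega)

section Bounded

variable {P : Set M} {n : ℕ}

theorem rkSet_bdd (hn : ∀ (c : ℕ → M) (m : ℕ), IdemChain P c m → m ≤ n) (e : M) :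
    BddAbove (rkSet P e) :=
  ⟨n, fun m hm => by obtain ⟨c, hc, _⟩ := hm; exact hn c m hc⟩

theorem rk_le (hn : ∀ (c : ℕ → M) (m : ℕ), IdemChain P c m → m ≤ n) (e : M) :
    rk P e ≤ n := by
  by_cases hne : (rkSet P e).Nonempty
  · exact csSup_le hne (fun m hm => by obtain ⟨c, hc, _⟩ := hm; exact hn c m hc)
  · rw [rk, Set.not_nonempty_iff_eq_empty.mp hne]
    rw [csSup_empty]
    exact bot_le

theorem rk_mono (hn : ∀ (c : ℕ → M) (m : ℕ), IdemChain P c m → m ≤ n) {e f : M}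
    (h : leJ e f) : rk P e ≤ rk P f := by
  by_cases hne : (rkSet P e).Nonempty
  · refine csSup_le hne (fun m hm => ?_)
    obtain ⟨c, hc, hl⟩ := hm
    exact le_csSup (rkSet_bdd hn f) ⟨c, hc, leJ_trans hl h⟩
  · rw [rk, Set.not_nonempty_iff_eq_empty.mp hne]
    rw [csSup_empty]
    exact bot_le

theorem mem_iff_odd_rk (hn : ∀ (c : ℕ → M) (m : ℕ), IdemChain P c m → m ≤ n) {e : M}
    (he : IsIdempotentElem e) : e ∈ P ↔ Odd (rk P e) := by
  have hbdd := rkSet_bdd hn e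
  by_cases hne : (rkSet P e).Nonempty
  · have hmem : rk P e ∈ rkSet P e := Nat.sSup_mem hne hbdd
    obtain ⟨c, hc, hle⟩ := hmem
    set m := rk P e with hm
    have hm0 : 0 < m := hc.1
    have halt := chain_even hc
    have hlast : c (m - 1) ∈ P ↔ Odd m := by
      rw [halt (m - 1) (by omega), Nat.even_iff, Nat.odd_iff]
      omega
    rw [← hlast]
    by_contra hcon
    -- extend the chain by `e`
    obtain ⟨_, hidem, hJ, h0, haltc⟩ := hc
    set c' : ℕ → M := fun i => if i < m then c i else e with hc'
    have hch : IdemChain P c' (m + 1) := by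
      refine ⟨by omega, ?_, ?_, ?_, ?_⟩
      · intro i hi
        by_cases h : i < m
        · simpa [hc', h] using hidem i h
        · simpa [hc', h] using he
      · intro i hi
        by_cases h : i + 1 < m
        · simpa [hc', h, show i < m by omega] using hJ i h
        · have hieq : i = m - 1 := by omega
          subst hieq
          simpa [hc', show m - 1 < m by omega, show ¬ (m - 1 + 1 < m) by omega] using hle
      · simpa [hc', hm0] using h0
      · intro i hi1 hi2
        by_cases h : i < m
        · simpa [hc', h, show i - 1 < m by omega] using haltc i hi1 h
        · have hieq : i = m := by omega
          subst hieq
          simp only [hc', lt_irrefl, if_neg (lt_irrefl m), show m - 1 < m by omega, if_pos]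
          tauto
    have hmem' : m + 1 ∈ rkSet P e := by
      refine ⟨c', hch, ?_⟩
      simpa [hc', Nat.add_sub_cancel] using leJ_refl e
    have h5 : m + 1 ≤ m := by rw [hm, rk]; exact le_csSup hbdd hmem'
    omega
  · have h0 : rk P e = 0 := by
      rw [rk, Set.not_nonempty_iff_eq_empty.mp hne]
      exact csSup_empty
    rw [h0]
    simp only [Nat.odd_iff, Nat.zero_mod, iff_false]
    · constructor
      · intro hP
        exact absurd ⟨1, ⟨fun _ => e,
          ⟨one_pos, fun i _ => he, fun i h => absurd h (by omega), hP,
            fun i hi h => by omega⟩, leJ_refl e⟩⟩ hne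
      · omega

end Bounded

theorem partialAlt_mem {E : Type*} (r : E → ℕ) (j : ℕ) (x : E) :
    x ∈ partialAlt (fun i => {u | i < r u}) j ↔ Odd (min (r x) j) := by
  induction j with
  | zero => simp [partialAlt, Nat.odd_iff]
  | succ j ih =>
    by_cases hj : Even j
    · rw [Nat.even_iff] at hj
      simp only [partialAlt, if_pos (Nat.even_iff.mpr hj), Set.mem_union, ih,
        Set.mem_setOf_eq, Nat.odd_iff]
      omega
    · rw [Nat.not_even_iff] at hj
      simp only [partialAlt, if_neg (show ¬ Even j by rw [Nat.even_iff]; omega),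
        Set.mem_diff, ih, Set.mem_setOf_eq]
      simp only [Nat.odd_iff]
      omega

end Aux

/-- If `P` is a cyclic subset of a finite monoid `M` and every `P`-chain of
idempotents has length at most `n`, then there is a decreasing chain
`P₁ ⊇ ⋯ ⊇ Pₙ` of cyclic subsets of `M`, each upward closed on idempotents for
the `J`-preorder, such that `P = P₁ − P₂ + ⋯ ± Pₙ`. -/
theorem cyclic_diff_decomposition {M : Type*} [Monoid M] [Fintype M]
    (P : Set M) (hcyc : IsCyclicSet P) (n : ℕ)
    (hb : ∀ (e : ℕ → M) (m : ℕ), IdemChain P e m → m ≤ n) :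
    ∃ Pseq : ℕ → Set M,
      (∀ i, i < n → IsCyclicSet (Pseq i)) ∧
      (∀ i, i < n → ∀ e f : M, IsIdempotentElem e → IsIdempotentElem f →
        e ∈ Pseq i → leJ e f → f ∈ Pseq i) ∧
      (∀ i j, i ≤ j → j < n → Pseq j ⊆ Pseq i) ∧
      P = partialAlt Pseq n := by
  classical
  have hconj : ∀ u v : M, rk P (omg (u * v)) = rk P (omg (v * u)) := by
    intro u v
    exact le_antisymm (rk_mono hb (leJ_omg_conj u v)) (rk_mono hb (leJ_omg_conj v u))
  refine ⟨fun i => {u | i < rk P (omg u)}, ?_, ?_, ?_, ?_⟩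
  · intro i _
    constructor
    · intro u k hk
      simp only [Set.mem_setOf_eq, omg_pow u hk]
    · intro u v
      simp only [Set.mem_setOf_eq, hconj u v]
  · intro i _ e f he hf hi hle
    simp only [Set.mem_setOf_eq, omg_of_idem he, omg_of_idem hf] at hi ⊢
    exact lt_of_lt_of_le hi (rk_mono hb hle)
  · intro i j hij hj u hu
    simp only [Set.mem_setOf_eq] at hu ⊢
    omega
  · ext u
    rw [partialAlt_mem (fun u => rk P (omg u)) n u]
    have hk0 := (omg_spec u).1
    have h1 : u ∈ P ↔ omg u ∈ P := (hcyc.1 u _ hk0).symm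
    have h2 : omg u ∈ P ↔ Odd (rk P (omg u)) := mem_iff_odd_rk hb (omg_idem u)
    have h3 : rk P (omg u) ≤ n := rk_le hb (omg u)
    rw [min_eq_left h3]
    rw [h1, h2]
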